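/- For w ∈ S_n, if w has at least one 132-pattern (i.e., η_w ≥ 1), then the bottom pipe dream B_w and top pipe dream T_w are distinct as subsets of the grid. -/

import Mathlib

open Finset

/-- The Rothe diagram of a permutation (0-based coordinates). -/
def Rothe {n : ℕ} (w : Equiv.Perm (Fin n)) : Finset (Fin n × Fin n) :=
  Finset.univ.filter (fun p => p.2 < w p.1 ∧ p.1 < w⁻¹ p.2)

/-- The rank function r_w(i,j) = #{k : k ≤ i and w(k) ≤ j}. -/
def rk {n : ℕ} (w : Equiv.Perm (Fin n)) (i j : Fin n) : ℕ :=
  (Finset.univ.filter (fun k => k ≤ i ∧ w k ≤ j)).card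

/-- m_i(w) = #{j : j > i and w(j) < w(i)}. -/
def mrow {n : ℕ} (w : Equiv.Perm (Fin n)) (i : Fin n) : ℕ :=
  (Finset.univ.filter (fun j => i < j ∧ w j < w i)).card

/-- The set of 132-patterns of w. -/
def P132 {n : ℕ} (w : Equiv.Perm (Fin n)) : Finset (Fin n × Fin n × Fin n) :=
  Finset.univ.filter
    (fun t => t.1 < t.2.1 ∧ t.2.1 < t.2.2 ∧ w t.1 < w t.2.2 ∧ w t.2.2 < w t.2.1)

/-!
Left-justifying a row of the Rothe diagram sends each box to its rank within the row, so row `i`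
of `B_w` is `{i} × [0, c_i)`, where `c = mrow w` is the Lehmer code. Transposing, column `j` of
`T_w` is `[0, c_j(w⁻¹)) × {j}`, so `T_w` is closed downward in the row index. Hence if `B_w = T_w`
and `i ≤ j` with `c_i < c_j`, the box `(j, c_i)` of `B_w` lies in `T_w`, so does `(i, c_i)`, and
then `(i, c_i) ∈ B_w`, which is absurd: the code of `w` is weakly decreasing. But a 132-pattern
`(i, j, k)` with `i` as large as possible has `c_i < c_j`: every `m > i` with `w m < w i` lies
beyond `j` and below `w j`, and `k` is counted by `c_j` but not by `c_i`.
-/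

section CardFilterLt

variable {α : Type*} [LinearOrder α] (s : Finset α)

lemma card_filter_lt_lt_card {x : α} (hx : x ∈ s) : #(s.filter (· < x)) < #s :=
  card_lt_card (filter_ssubset.2 ⟨x, hx, lt_irrefl x⟩)

lemma strictMonoOn_card_filter_lt : StrictMonoOn (fun x => #(s.filter (· < x))) s := by
  intro x hx y _ hxy
  refine card_lt_card ((ssubset_iff_of_subset ?_).2 ⟨x, mem_filter.2 ⟨hx, hxy⟩, by simp⟩)
  exact monotone_filter_right s fun _ _ h => h.trans hxy

lemma image_card_filter_lt : s.image (fun x => #(s.filter (· < x))) = range #s := by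
  refine eq_of_subset_of_card_le (fun m hm => ?_) ?_
  · obtain ⟨x, hx, rfl⟩ := mem_image.1 hm
    exact mem_range.2 (card_filter_lt_lt_card s hx)
  · rw [card_range, card_image_of_injOn (strictMonoOn_card_filter_lt s).injOn]

end CardFilterLt

section Permutation

variable {n : ℕ} (w : Equiv.Perm (Fin n))

lemma mem_Rothe {i j : Fin n} : (i, j) ∈ Rothe w ↔ j < w i ∧ i < w⁻¹ j := by
  simp [Rothe]

lemma Rothe_inv : Rothe w⁻¹ = (Rothe w).map (Equiv.prodComm _ _).toEmbedding := by
  ext ⟨j, i⟩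
  simp [mem_map_equiv, mem_Rothe, and_comm]

lemma rk_inv (i j : Fin n) : rk w⁻¹ j i = rk w i j := by
  refine card_nbij' (⇑w⁻¹) w ?_ ?_ ?_ ?_ <;> intro k <;> simp [and_comm]

def rotheRow (i : Fin n) : Finset (Fin n) :=
  univ.filter fun j => (i, j) ∈ Rothe w

lemma card_rotheRow (i : Fin n) : #(rotheRow w i) = mrow w i := by
  refine card_nbij' (⇑w⁻¹) w ?_ ?_ ?_ ?_ <;> intro k <;> simp [rotheRow, mem_Rothe, and_comm]

lemma rk_eq_card_filter {i j : Fin n} (hij : (i, j) ∈ Rothe w) :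
    rk w i j = #((Iio j).filter fun j' => w⁻¹ j' ≤ i) := by
  have hj : i < w⁻¹ j := ((mem_Rothe w).1 hij).2
  refine card_nbij' w (⇑w⁻¹) ?_ ?_ ?_ ?_ <;> intro k
  · simp only [coe_filter, mem_univ, true_and, Set.mem_ofPred_eq, mem_Iio]
    rintro ⟨hki, hkj⟩
    refine ⟨hkj.lt_of_ne ?_, by simpa using hki⟩
    rintro rfl
    simp only [Equiv.Perm.coe_inv, Equiv.symm_apply_apply] at hj
    exact hj.not_ge hki
  · simpa using fun hkj hki => ⟨hki, hkj.le⟩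
  · simp
  · simp

lemma sub_rk_eq_card_filter_rotheRow {i j : Fin n} (hij : (i, j) ∈ Rothe w) :
    (j : ℕ) - rk w i j = #((rotheRow w i).filter (· < j)) := by
  have hrow : (Iio j).filter (fun j' => ¬ w⁻¹ j' ≤ i) = (rotheRow w i).filter (· < j) := by
    ext j'
    simp only [rotheRow, mem_filter, mem_Iio, mem_univ, true_and, mem_Rothe, not_le]
    exact ⟨fun h => ⟨⟨h.1.trans ((mem_Rothe w).1 hij).1, h.2⟩, h.1⟩, fun h => ⟨h.2, h.1.2⟩⟩
  have hsplit := card_filter_add_card_filter_not (s := Iio j) (p := fun j' => w⁻¹ j' ≤ i)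
  rw [Fin.card_Iio] at hsplit
  rw [rk_eq_card_filter w hij, ← hrow]
  omega

def bottomPipeDream : Finset (ℕ × ℕ) :=
  (Rothe w).image fun p => ((p.1 : ℕ), (p.2 : ℕ) - rk w p.1 p.2)

def topPipeDream : Finset (ℕ × ℕ) :=
  (Rothe w).image fun p => ((p.1 : ℕ) - rk w p.1 p.2, (p.2 : ℕ))

lemma mem_bottomPipeDream {x y : ℕ} :
    (x, y) ∈ bottomPipeDream w ↔ ∃ hx : x < n, y < mrow w ⟨x, hx⟩ := by
  constructor
  · intro hmem
    obtain ⟨⟨i, j⟩, hij, hxy⟩ := mem_image.1 hmem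
    obtain ⟨rfl, rfl⟩ := Prod.mk.inj hxy
    refine ⟨i.isLt, ?_⟩
    rw [Fin.eta, ← card_rotheRow, sub_rk_eq_card_filter_rotheRow w hij]
    exact card_filter_lt_lt_card _ (by simpa [rotheRow] using hij)
  · rintro ⟨hx, hy⟩
    rw [← card_rotheRow, ← mem_range, ← image_card_filter_lt] at hy
    obtain ⟨j, hj, hjy⟩ := mem_image.1 hy
    have hij : (⟨x, hx⟩, j) ∈ Rothe w := by simpa [rotheRow] using hj
    exact mem_image.2 ⟨_, hij, by rw [sub_rk_eq_card_filter_rotheRow w hij, hjy]⟩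

lemma topPipeDream_eq_map_swap :
    topPipeDream w = (bottomPipeDream w⁻¹).map (Equiv.prodComm ℕ ℕ).toEmbedding := by
  rw [bottomPipeDream, topPipeDream, Rothe_inv, map_eq_image, image_image, map_eq_image,
    image_image]
  refine image_congr fun p _ => ?_
  simp [rk_inv]

lemma mem_topPipeDream {x y : ℕ} :
    (x, y) ∈ topPipeDream w ↔ ∃ hy : y < n, x < mrow w⁻¹ ⟨y, hy⟩ := by
  rw [topPipeDream_eq_map_swap, mem_map_equiv]
  exact mem_bottomPipeDream w⁻¹

lemma antitone_mrow_of_bottomPipeDream_eq (h : bottomPipeDream w = topPipeDream w) :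
    Antitone (mrow w) := by
  intro i j hij
  by_contra! hlt
  have hB : ((j : ℕ), mrow w i) ∈ bottomPipeDream w :=
    (mem_bottomPipeDream w).2 ⟨j.isLt, hlt⟩
  obtain ⟨hc, hjc⟩ := (mem_topPipeDream w).1 (h ▸ hB)
  have hT : ((i : ℕ), mrow w i) ∈ topPipeDream w :=
    (mem_topPipeDream w).2 ⟨hc, (Fin.val_le_of_le hij).trans_lt hjc⟩
  obtain ⟨_, hii⟩ := (mem_bottomPipeDream w).1 (h ▸ hT)
  exact lt_irrefl _ hii

lemma mrow_lt_mrow_of_pattern {i j k : Fin n} (hjk : j < k) (hik : w i < w k) (hkj : w k < w j)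
    (hgap : ∀ m, i < m → m < j → w i ≤ w m) : mrow w i < mrow w j := by
  refine card_lt_card ((ssubset_iff_of_subset fun m hm => ?_).2 ⟨k, ?_, ?_⟩)
  · simp only [mem_filter, mem_univ, true_and] at hm ⊢
    obtain ⟨him, hmi⟩ := hm
    have hjm : j < m := by
      rcases lt_trichotomy m j with hmj | rfl | hjm
      · exact absurd hmi (hgap m him hmj).not_gt
      · exact absurd hmi (hik.trans hkj).not_gt
      · exact hjm
    exact ⟨hjm, hmi.trans (hik.trans hkj)⟩
  · simpa using ⟨hjk, hkj⟩
  · simpa using fun _ => hik.le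

lemma not_antitone_mrow_of_P132_nonempty (h : (P132 w).Nonempty) : ¬ Antitone (mrow w) := by
  obtain ⟨⟨i, j, k⟩, hijk, hmax⟩ := exists_max_image (P132 w) (fun t => t.1) h
  simp only [P132, mem_filter, mem_univ, true_and] at hijk
  obtain ⟨hij, hjk, hik, hkj⟩ := hijk
  have hgap : ∀ m, i < m → m < j → w i ≤ w m := fun m him hmj => by
    by_contra! hmi
    have := hmax (m, j, k) (by simpa [P132] using ⟨hmj, hjk, hmi.trans hik, hkj⟩)
    exact this.not_gt him
  exact fun hanti => (hanti hij.le).not_gt (mrow_lt_mrow_of_pattern w hjk hik hkj hgap)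

end Permutation

/-- If w contains a 132-pattern, then the bottom pipe dream B_w and
top pipe dream T_w are distinct. -/
theorem stmt18 {n : ℕ} (w : Equiv.Perm (Fin n)) (h : (P132 w).Nonempty) :
    (Rothe w).image (fun p => ((p.1 : ℕ), (p.2 : ℕ) - rk w p.1 p.2)) ≠
      (Rothe w).image (fun p => ((p.1 : ℕ) - rk w p.1 p.2, (p.2 : ℕ))) :=
  fun heq => not_antitone_mrow_of_P132_nonempty w h (antitone_mrow_of_bottomPipeDream_eq w heq)
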